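/- arXiv:1110.4733 — 7 statements merged into one kernel-verified Lean document; each statement's English description precedes it below -/
import Mathlib

section
/- Let E be a complex inner product space and let u₁, u₂ ∈ E be nonzero vectors. Writing û = u/‖u‖ for the normalization of a nonzero vector u, one has ‖ ‖u₂‖ • û₁ − ‖u₁‖ • û₂ ‖ = ‖u₂ − u₁‖. -/
/-! Up to the factor `‖x‖ * ‖y‖`, the vector on the left is the difference of the images of `x`
and `y` under inversion in the unit sphere, and that inversion scales the distance between `x` and
`y` by `(‖x‖ * ‖y‖)⁻¹` (`dist_div_norm_sq_smul`). -/

theorem norm_norm_smul_normalize_sub_norm_smul_normalize {F : Type*} [NormedAddCommGroup F]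
    [InnerProductSpace ℝ F] {x y : F} (hx : x ≠ 0) (hy : y ≠ 0) :
    ‖‖y‖ • (‖x‖⁻¹ • x) - ‖x‖ • (‖y‖⁻¹ • y)‖ = ‖x - y‖ := by
  have h_inversion : ‖y‖ • (‖x‖⁻¹ • x) - ‖x‖ • (‖y‖⁻¹ • y) =
      (‖x‖ * ‖y‖) • ((1 / ‖x‖) ^ 2 • x - (1 / ‖y‖) ^ 2 • y) := by
    rw [smul_sub, smul_smul, smul_smul, smul_smul, smul_smul]
    congr 2 <;> field_simp
  rw [h_inversion, norm_smul, ← dist_eq_norm, dist_div_norm_sq_smul hx hy, dist_eq_norm,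
    Real.norm_of_nonneg (by positivity), ← mul_assoc, one_pow, mul_one_div_cancel (by positivity),
    one_mul]

/-- For nonzero vectors `u₁, u₂` in a complex inner product space, with `û = ‖u‖⁻¹ • u`
the normalization, one has `‖‖u₂‖ • û₁ - ‖u₁‖ • û₂‖ = ‖u₂ - u₁‖`. -/
theorem norm_smul_normalized_sub (E : Type*) [NormedAddCommGroup E] [InnerProductSpace ℂ E]
    (u₁ u₂ : E) (h₁ : u₁ ≠ 0) (h₂ : u₂ ≠ 0) :
    ‖‖u₂‖ • (‖u₁‖⁻¹ • u₁) - ‖u₁‖ • (‖u₂‖⁻¹ • u₂)‖ = ‖u₂ - u₁‖ := by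
  let : InnerProductSpace ℝ E := InnerProductSpace.rclikeToReal ℂ E
  rw [norm_norm_smul_normalize_sub_norm_smul_normalize h₁ h₂, norm_sub_rev]
end

section
/- Let (X, μ) be a measure space, m ≥ 1 an integer, and let u₁, u₂ : X → ℂᵐ be square-integrable measurable functions. Let σ₁, σ₂ : X → ℝ be measurable functions with 0 < σⱼ(x) ≤ σ_M for a.e. x ∈ X (j = 1, 2), and let α > σ_M be a constant. Assume the coercivity inequality Re ∫_X ⟨σ₁(x)u₁(x) − σ₂(x)u₂(x), u₁(x) − u₂(x)⟩ dμ(x) ≥ α ∫_X ‖u₁(x) − u₂(x)‖² dμ(x). If σ₁(x)‖u₁(x)‖² = σ₂(x)‖u₂(x)‖² for a.e. x ∈ X, then u₁ = u₂ a.e. in X, and σ₁(x) = σ₂(x) for a.e. x in the set where σ₁(x)‖u₁(x)‖² > 0. -/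
/-!
Pointwise, `Re ⟪s₁ • v - s₂ • w, v - w⟫ = (s₁ + s₂)/2 ‖v - w‖² + (s₁ - s₂)/2 (‖v‖² - ‖w‖²)`,
and equal measurements `s₁‖v‖² = s₂‖w‖²` make the last term nonpositive: the larger weight
goes with the smaller norm. Hence the coercivity integrand is at most `σM ‖u₁ - u₂‖²`, and
coercivity with a constant `α > σM` forces `∫ ‖u₁ - u₂‖² = 0`. Once `u₁ = u₂`, the equality of
measurements can be cancelled wherever it is positive.
-/

open MeasureTheory

section Pointwise

variable {F : Type*} [NormedAddCommGroup F] [InnerProductSpace ℝ F]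

theorem real_inner_smul_sub_smul_sub (s₁ s₂ : ℝ) (v w : F) :
    inner ℝ (s₁ • v - s₂ • w) (v - w)
      = (s₁ + s₂) / 2 * ‖v - w‖ ^ 2 + (s₁ - s₂) / 2 * (‖v‖ ^ 2 - ‖w‖ ^ 2) := by
  rw [norm_sub_sq_real]
  simp only [inner_sub_left, inner_sub_right, real_inner_smul_left, real_inner_self_eq_norm_sq,
    real_inner_comm v w]
  ring

theorem real_inner_smul_sub_smul_sub_le {s₁ s₂ c : ℝ} {v w : F} (h₁ : 0 < s₁)
    (hc₁ : s₁ ≤ c) (hc₂ : s₂ ≤ c) (h : s₁ * ‖v‖ ^ 2 = s₂ * ‖w‖ ^ 2) :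
    inner ℝ (s₁ • v - s₂ • w) (v - w) ≤ c * ‖v - w‖ ^ 2 := by
  have hcross : (s₁ - s₂) * (‖v‖ ^ 2 - ‖w‖ ^ 2) ≤ 0 := by
    have key : s₁ * ((s₁ - s₂) * (‖v‖ ^ 2 - ‖w‖ ^ 2)) = -((s₁ - s₂) ^ 2 * ‖w‖ ^ 2) := by
      linear_combination (s₁ - s₂) * h
    nlinarith [mul_nonneg (sq_nonneg (s₁ - s₂)) (sq_nonneg ‖w‖)]
  rw [real_inner_smul_sub_smul_sub]
  nlinarith [sq_nonneg ‖v - w‖]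

end Pointwise

theorem re_inner_smul_sub_smul_sub_le {E : Type*} [NormedAddCommGroup E] [InnerProductSpace ℂ E]
    {s₁ s₂ c : ℝ} {v w : E} (h₁ : 0 < s₁) (hc₁ : s₁ ≤ c) (hc₂ : s₂ ≤ c)
    (h : s₁ * ‖v‖ ^ 2 = s₂ * ‖w‖ ^ 2) :
    (inner ℂ (s₁ • v - s₂ • w) (v - w)).re ≤ c * ‖v - w‖ ^ 2 :=
  letI := InnerProductSpace.complexToReal (G := E)
  real_inner_smul_sub_smul_sub_le h₁ hc₁ hc₂ h

namespace MeasureTheory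

variable {X : Type*} [MeasurableSpace X] {μ : Measure X}

theorem MemLp.smul_of_ae_bound {𝕜 E : Type*} [NormedRing 𝕜] [NormedAddCommGroup E]
    [MulActionWithZero 𝕜 E] [IsBoundedSMul 𝕜 E] {p : ENNReal} {f : X → E} {φ : X → 𝕜}
    (hf : MemLp f p μ) (hφ : AEStronglyMeasurable φ μ) {C : ℝ} (hC : ∀ᵐ x ∂μ, ‖φ x‖ ≤ C) :
    MemLp (φ • f) p μ :=
  hf.smul (r := p) (memLp_top_of_bound hφ C hC)

theorem MemLp.integrable_inner {𝕜 E : Type*} [RCLike 𝕜] [NormedAddCommGroup E]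
    [InnerProductSpace 𝕜 E] {f g : X → E} (hf : MemLp f 2 μ) (hg : MemLp g 2 μ) :
    Integrable (fun x => inner 𝕜 (f x) (g x)) μ := by
  refine (integrable_congr ?_).mp (L2.integrable_inner (𝕜 := 𝕜) hf.toLp hg.toLp)
  filter_upwards [hf.coeFn_toLp, hg.coeFn_toLp] with x hfx hgx
  rw [hfx, hgx]

theorem ae_eq_zero_of_mul_integral_le_integral {f g : X → ℝ} {c α : ℝ} (hg₀ : 0 ≤ᵐ[μ] g)
    (hg : Integrable g μ) (hf : Integrable f μ) (hfg : ∀ᵐ x ∂μ, f x ≤ c * g x) (hcα : c < α)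
    (h : α * ∫ x, g x ∂μ ≤ ∫ x, f x ∂μ) :
    g =ᵐ[μ] 0 := by
  have hfc : ∫ x, f x ∂μ ≤ c * ∫ x, g x ∂μ := by
    rw [← integral_const_mul]
    exact integral_mono_ae hf (hg.const_mul c) hfg
  have hint : ∫ x, g x ∂μ = 0 :=
    le_antisymm (by nlinarith) (integral_nonneg_of_ae hg₀)
  exact (integral_eq_zero_iff_of_nonneg_ae hg₀ hg).mp hint

end MeasureTheory

theorem uniqueness_from_quadratic_internal_data_general
    {X : Type*} [MeasurableSpace X] (μ : Measure X) (m : ℕ)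
    (u₁ u₂ : X → EuclideanSpace ℂ (Fin m))
    (hu₁ : MemLp u₁ 2 μ) (hu₂ : MemLp u₂ 2 μ)
    (σ₁ σ₂ : X → ℝ) (hσ₁m : Measurable σ₁) (hσ₂m : Measurable σ₂)
    (σM : ℝ)
    (hσ₁ : ∀ᵐ x ∂μ, 0 < σ₁ x ∧ σ₁ x ≤ σM)
    (hσ₂ : ∀ᵐ x ∂μ, 0 < σ₂ x ∧ σ₂ x ≤ σM)
    (α : ℝ) (hα : σM < α)
    (hcoer : α * ∫ x, ‖u₁ x - u₂ x‖ ^ 2 ∂μ ≤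
      (∫ x, (inner ℂ (σ₁ x • u₁ x - σ₂ x • u₂ x) (u₁ x - u₂ x) : ℂ) ∂μ).re)
    (hH : ∀ᵐ x ∂μ, σ₁ x * ‖u₁ x‖ ^ 2 = σ₂ x * ‖u₂ x‖ ^ 2) :
    u₁ =ᵐ[μ] u₂ ∧ (∀ᵐ x ∂μ, 0 < σ₁ x * ‖u₁ x‖ ^ 2 → σ₁ x = σ₂ x) := by
  have norm_le {σ : X → ℝ} (hσ : ∀ᵐ x ∂μ, 0 < σ x ∧ σ x ≤ σM) : ∀ᵐ x ∂μ, ‖σ x‖ ≤ σM := by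
    filter_upwards [hσ] with x hx
    exact (Real.norm_of_nonneg hx.1.le).trans_le hx.2
  have hdiff : MemLp (u₁ - u₂) 2 μ := hu₁.sub hu₂
  have hweighted : MemLp (σ₁ • u₁ - σ₂ • u₂) 2 μ :=
    (hu₁.smul_of_ae_bound hσ₁m.aestronglyMeasurable (norm_le hσ₁)).sub
      (hu₂.smul_of_ae_bound hσ₂m.aestronglyMeasurable (norm_le hσ₂))
  have hinner := hweighted.integrable_inner (𝕜 := ℂ) hdiff
  have hnorm_sq_zero : (fun x => ‖u₁ x - u₂ x‖ ^ 2) =ᵐ[μ] 0 := by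
    refine ae_eq_zero_of_mul_integral_le_integral (.of_forall fun x => by positivity)
      hdiff.norm.integrable_sq hinner.re ?_ hα (hcoer.trans_eq (integral_re hinner).symm)
    filter_upwards [hσ₁, hσ₂, hH] with x h₁ h₂ hx
    exact re_inner_smul_sub_smul_sub_le h₁.1 h₁.2 h₂.2 hx
  have heq : u₁ =ᵐ[μ] u₂ := by
    filter_upwards [hnorm_sq_zero] with x hx
    simpa [sub_eq_zero] using hx
  refine ⟨heq, ?_⟩
  filter_upwards [heq, hH] with x hx hHx hpos
  rw [hx] at hHx hpos
  exact mul_right_cancel₀ (right_ne_zero_of_mul hpos.ne') hHx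

/-- Uniqueness for internal measurements `H = σ‖u‖²` under a spectral-gap/coercivity
condition: if `σ₁‖u₁‖² = σ₂‖u₂‖²` a.e., then `u₁ = u₂` a.e. and `σ₁ = σ₂` a.e. on the
set where the measurement is positive. -/
theorem uniqueness_from_quadratic_internal_data
    {X : Type*} [MeasurableSpace X] (μ : Measure X) (m : ℕ) (hm : 1 ≤ m)
    (u₁ u₂ : X → EuclideanSpace ℂ (Fin m))
    (hu₁ : MemLp u₁ 2 μ) (hu₂ : MemLp u₂ 2 μ)
    (σ₁ σ₂ : X → ℝ) (hσ₁m : Measurable σ₁) (hσ₂m : Measurable σ₂)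
    (σM : ℝ)
    (hσ₁ : ∀ᵐ x ∂μ, 0 < σ₁ x ∧ σ₁ x ≤ σM)
    (hσ₂ : ∀ᵐ x ∂μ, 0 < σ₂ x ∧ σ₂ x ≤ σM)
    (α : ℝ) (hα : σM < α)
    (hcoer : α * ∫ x, ‖u₁ x - u₂ x‖ ^ 2 ∂μ ≤
      (∫ x, (inner ℂ (σ₁ x • u₁ x - σ₂ x • u₂ x) (u₁ x - u₂ x) : ℂ) ∂μ).re)
    (hH : ∀ᵐ x ∂μ, σ₁ x * ‖u₁ x‖ ^ 2 = σ₂ x * ‖u₂ x‖ ^ 2) :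
    u₁ =ᵐ[μ] u₂ ∧ (∀ᵐ x ∂μ, 0 < σ₁ x * ‖u₁ x‖ ^ 2 → σ₁ x = σ₂ x) :=
  uniqueness_from_quadratic_internal_data_general μ m u₁ u₂ hu₁ hu₂ σ₁ σ₂ hσ₁m hσ₂m σM hσ₁ hσ₂ α hα
    hcoer hH
end

section
/- Let Ω ⊆ ℝⁿ be open, let σ : Ω → ℝ be continuously differentiable with σ > 0 on Ω, and let u : Ω → ℝ be twice continuously differentiable with ∇u(x) ≠ 0 for every x ∈ Ω and ∇·(σ∇u) = 0 on Ω. Define H := σ|∇u|². Then at every x ∈ Ω: ∑_{i,j} ( δᵢⱼ − 2 (∂ᵢu)(∂ⱼu)/|∇u|² ) ∂²ᵢⱼu + ∇(log H) · ∇u = 0. -/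
/-- Partial derivative `∂f/∂xᵢ` of a scalar function on Euclidean space. -/
noncomputable def pderiv' {n : ℕ} (f : EuclideanSpace ℝ (Fin n) → ℝ) (i : Fin n)
    (x : EuclideanSpace ℝ (Fin n)) : ℝ :=
  fderiv ℝ f x (EuclideanSpace.single i 1)

/-- Gradient of a scalar function on Euclidean space. -/
noncomputable def grad' {n : ℕ} (f : EuclideanSpace ℝ (Fin n) → ℝ)
    (x : EuclideanSpace ℝ (Fin n)) : EuclideanSpace ℝ (Fin n) :=
  (EuclideanSpace.equiv (Fin n) ℝ).symm fun i => pderiv' f i x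

/-- Divergence `∇·F = ∑ᵢ ∂Fᵢ/∂xᵢ` of a vector field on Euclidean space. -/
noncomputable def diverg {n : ℕ} (F : EuclideanSpace ℝ (Fin n) → EuclideanSpace ℝ (Fin n))
    (x : EuclideanSpace ℝ (Fin n)) : ℝ :=
  ∑ i, pderiv' (fun y => F y i) i x

/-! With `a = ∇u` and `c = ∇²u`, the logarithm splits as `log H = log σ + log |a|²`, so
`∇ log H · a = ∇σ · a / σ + 2 aᵀ c a / |a|²`. Expanding the divergence equation as
`∇σ · a + σ Δu = 0` turns the first term into `-Δu`, which cancels the trace part of the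
operator `I - 2 â ⊗ â`, while the second term cancels its rank-one part. -/

open Finset

section
variable {n : ℕ} {f g : EuclideanSpace ℝ (Fin n) → ℝ} {x : EuclideanSpace ℝ (Fin n)} {i : Fin n}

lemma pderiv'_mul (hf : DifferentiableAt ℝ f x) (hg : DifferentiableAt ℝ g x) :
    pderiv' (fun y => f y * g y) i x = pderiv' f i x * g x + f x * pderiv' g i x := by
  simp only [pderiv', fderiv_fun_mul hf hg, add_apply, smul_apply, smul_eq_mul]
  ring

lemma pderiv'_sum {ι : Type*} (s : Finset ι) {F : ι → EuclideanSpace ℝ (Fin n) → ℝ}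
    (hF : ∀ j ∈ s, DifferentiableAt ℝ (F j) x) :
    pderiv' (fun y => ∑ j ∈ s, F j y) i x = ∑ j ∈ s, pderiv' (F j) i x := by
  simp only [pderiv', fderiv_fun_sum hF, _root_.sum_apply]

lemma pderiv'_log (hf : DifferentiableAt ℝ f x) (hf0 : f x ≠ 0) :
    pderiv' (fun y => Real.log (f y)) i x = pderiv' f i x / f x := by
  simp only [pderiv', fderiv.log hf hf0, smul_apply, smul_eq_mul, inv_mul_eq_div]

lemma pderiv'_log_mul (hf : DifferentiableAt ℝ f x) (hg : DifferentiableAt ℝ g x)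
    (hf0 : f x ≠ 0) (hg0 : g x ≠ 0) :
    pderiv' (fun y => Real.log (f y * g y)) i x = pderiv' f i x / f x + pderiv' g i x / g x := by
  rw [pderiv'_log (hf.fun_mul hg) (mul_ne_zero hf0 hg0), pderiv'_mul hf hg]
  field_simp

lemma norm_grad'_sq (f : EuclideanSpace ℝ (Fin n) → ℝ) (x : EuclideanSpace ℝ (Fin n)) :
    ‖grad' f x‖ ^ 2 = ∑ j, pderiv' f j x ^ 2 := by
  simp [EuclideanSpace.norm_sq_eq, grad']

lemma inner_grad' (f g : EuclideanSpace ℝ (Fin n) → ℝ) (x : EuclideanSpace ℝ (Fin n)) :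
    inner ℝ (grad' f x) (grad' g x) = ∑ j, pderiv' f j x * pderiv' g j x := by
  simp [grad', PiLp.inner_apply, mul_comm]

lemma ContDiffAt.differentiableAt_pderiv' {m : WithTop ℕ∞} (hf : ContDiffAt ℝ m f x)
    (hm : 2 ≤ m) (j : Fin n) : DifferentiableAt ℝ (pderiv' f j) x :=
  ((hf.fderiv_right (m := 1) (by simpa [one_add_one_eq_two] using hm)).clm_apply
    contDiffAt_const).differentiableAt one_ne_zero

lemma differentiableAt_norm_grad'_sq (hf : ∀ j, DifferentiableAt ℝ (pderiv' f j) x) :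
    DifferentiableAt ℝ (fun y => ‖grad' f y‖ ^ 2) x := by
  simp_rw [norm_grad'_sq]
  exact DifferentiableAt.fun_sum fun j _ => (hf j).pow 2

lemma pderiv'_norm_grad'_sq (hf : ∀ j, DifferentiableAt ℝ (pderiv' f j) x) :
    pderiv' (fun y => ‖grad' f y‖ ^ 2) i x
      = 2 * ∑ j, pderiv' f j x * pderiv' (pderiv' f j) i x := by
  simp_rw [norm_grad'_sq, sq]
  rw [pderiv'_sum _ fun j _ => (hf j).fun_mul (hf j), mul_sum]
  exact sum_congr rfl fun j _ => by rw [pderiv'_mul (hf j) (hf j)]; ring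

lemma diverg_smul_grad' (hg : DifferentiableAt ℝ g x)
    (hf : ∀ j, DifferentiableAt ℝ (pderiv' f j) x) :
    diverg (fun y => g y • grad' f y) x
      = inner ℝ (grad' g x) (grad' f x) + g x * ∑ i, pderiv' (pderiv' f i) i x := by
  simp only [diverg, inner_grad', mul_sum, ← sum_add_distrib]
  exact sum_congr rfl fun i _ => pderiv'_mul hg (hf i)

lemma inner_grad'_log_mul_norm_grad'_sq (hg : DifferentiableAt ℝ g x)
    (hf : ∀ j, DifferentiableAt ℝ (pderiv' f j) x) (hg0 : g x ≠ 0) (hf0 : grad' f x ≠ 0) :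
    inner ℝ (grad' (fun y => Real.log (g y * ‖grad' f y‖ ^ 2)) x) (grad' f x)
      = inner ℝ (grad' g x) (grad' f x) / g x
        + 2 * (∑ i, ∑ j, pderiv' f i x * pderiv' f j x * pderiv' (pderiv' f j) i x)
          / ‖grad' f x‖ ^ 2 := by
  have hN0 : ‖grad' f x‖ ^ 2 ≠ 0 := pow_ne_zero 2 (norm_ne_zero_iff.2 hf0)
  simp only [inner_grad', pderiv'_log_mul hg (differentiableAt_norm_grad'_sq hf) hg0 hN0,
    pderiv'_norm_grad'_sq hf, add_mul, sum_add_distrib, sum_div, mul_sum, sum_mul]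
  congr 1
  · exact sum_congr rfl fun i _ => by ring
  · exact sum_congr rfl fun i _ => sum_congr rfl fun j _ => by ring

end

lemma sum_sum_kronecker_sub_mul {ι : Type*} [Fintype ι] [DecidableEq ι] (a : ι → ℝ)
    (c : ι → ι → ℝ) (S : ℝ) :
    ∑ i, ∑ j, ((if i = j then (1 : ℝ) else 0) - 2 * a i * a j / S) * c i j
      = ∑ i, c i i - 2 * (∑ i, ∑ j, a i * a j * c i j) / S := by
  simp only [sub_mul, sum_sub_distrib, ite_mul, one_mul, zero_mul, sum_ite_eq, mem_univ,
    if_true, mul_sum, sum_div]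
  congr 1
  exact sum_congr rfl fun i _ => sum_congr rfl fun j _ => by ring

/-- The 0-Laplacian identity of UMEIT: if `∇·(σ∇u) = 0`, `σ > 0` and `∇u ≠ 0` on `Ω`,
then with `H := σ|∇u|²` one has
`∑_{i,j} (δᵢⱼ − 2 ∂ᵢu ∂ⱼu / |∇u|²) ∂²ᵢⱼ u + ∇(log H)·∇u = 0` on `Ω`. -/
theorem zero_laplacian_hyperbolic_form {n : ℕ} (Ω : Set (EuclideanSpace ℝ (Fin n)))
    (hΩ : IsOpen Ω) (σ u : EuclideanSpace ℝ (Fin n) → ℝ)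
    (hσ : ContDiffOn ℝ 1 σ Ω) (hσpos : ∀ x ∈ Ω, 0 < σ x)
    (hu : ContDiffOn ℝ 2 u Ω) (hgrad : ∀ x ∈ Ω, grad' u x ≠ 0)
    (hdiv : ∀ x ∈ Ω, diverg (fun y => σ y • grad' u y) x = 0) :
    ∀ x ∈ Ω,
      (∑ i, ∑ j, ((if i = j then (1 : ℝ) else 0)
            - 2 * pderiv' u i x * pderiv' u j x / ‖grad' u x‖ ^ 2)
          * pderiv' (pderiv' u j) i x)
        + (inner ℝ (grad' (fun y => Real.log (σ y * ‖grad' u y‖ ^ 2)) x) (grad' u x) : ℝ)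
        = 0 := by
  intro x hx
  have hσx : DifferentiableAt ℝ σ x :=
    (hσ.contDiffAt (hΩ.mem_nhds hx)).differentiableAt one_ne_zero
  have hux : ∀ j, DifferentiableAt ℝ (pderiv' u j) x :=
    (hu.contDiffAt (hΩ.mem_nhds hx)).differentiableAt_pderiv' le_rfl
  have hσ0 : σ x ≠ 0 := (hσpos x hx).ne'
  have hdivx := diverg_smul_grad' hσx hux ▸ hdiv x hx
  rw [sum_sum_kronecker_sub_mul (fun i => pderiv' u i x),
    inner_grad'_log_mul_norm_grad'_sq hσx hux hσ0 (hgrad x hx)]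
  field_simp
  linear_combination hdivx
end

section
/- Let S be a set and let P : (S → ℝ) → (S → ℝ) be an ℝ-linear map. Let u₀, ψ, σ₀ : S → ℝ satisfy P u₀ = σ₀ · u₀, P ψ = −σ₀ · ψ, σ₀(x) > 0 and u₀(x) > 0 for all x ∈ S. Let δ ∈ ℝ be such that |δ| · |ψ(x)| < u₀(x) for all x ∈ S. Define u_δ := u₀ + δψ, σ_δ := σ₀ (u₀ − δψ)/(u₀ + δψ), and H_δ := σ_δ · u_δ². Then: (i) P u_δ = σ_δ · u_δ; (ii) σ_δ(x) > 0 for all x; (iii) H_δ = H_{−δ} = σ₀ (u₀² − δ²ψ²); (iv) if δ ≠ 0 then σ_δ(x) ≠ σ_{−δ}(x) at every x with ψ(x) ≠ 0; and (v) u_δ(x) = u₀(x) and σ_δ(x) = σ₀(x) at every x with ψ(x) = 0. -/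
/-!
Both eigen-equations are linear, so `P (u₀ + δψ) = σ₀ (u₀ - δψ)`, and dividing by
`u₀ + δψ > 0` exhibits `u_δ` as a solution with absorption `σ_δ`. Then
`H_δ = σ₀ (u₀ - δψ)(u₀ + δψ) = σ₀ (u₀² - δ²ψ²)` is even in `δ`, while
`σ_δ - σ_{-δ} = -4 σ₀ u₀ δψ / (u₀² - δ²ψ²)` vanishes only where `δψ = 0`.
-/

theorem LinearMap.apply_add_smul_of_eigen {S R : Type*} [CommRing R]
    (P : (S → R) →ₗ[R] (S → R)) {u ψ σ : S → R}
    (hu : P u = σ * u) (hψ : P ψ = -(σ * ψ)) (d : R) :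
    P (u + d • ψ) = σ * (u - d • ψ) := by
  rw [map_add, map_smul, hu, hψ, mul_sub, mul_smul_comm, smul_neg, sub_eq_add_neg]

section Pointwise

variable {K : Type*} [Field K]

theorem mul_sub_div_add_mul_add_sq {s u t : K} (h : u + t ≠ 0) :
    s * (u - t) / (u + t) * (u + t) ^ 2 = s * (u ^ 2 - t ^ 2) := by
  rw [sq, ← mul_assoc, div_mul_cancel₀ _ h]
  ring

theorem mul_sub_div_add_ne_mul_add_div_sub [CharZero K] {s u t : K}
    (hs : s ≠ 0) (hu : u ≠ 0) (ht : t ≠ 0) (hp : u + t ≠ 0) (hm : u - t ≠ 0) :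
    s * (u - t) / (u + t) ≠ s * (u + t) / (u - t) := by
  rw [Ne, div_eq_div_iff hp hm]
  intro h
  have : s * u * t = 0 := by linear_combination (-1 / 4 : K) * h
  simp_all

end Pointwise

theorem mul_sub_div_add_pos {s u t : ℝ} (hs : 0 < s) (ht : |t| < u) :
    0 < s * (u - t) / (u + t) := by
  obtain ⟨hlo, hhi⟩ := abs_lt.mp ht
  exact div_pos (mul_pos hs (by linarith)) (by linarith)

theorem ambrosetti_prodi_nonuniqueness_general {S : Type*}
    (P : (S → ℝ) →ₗ[ℝ] (S → ℝ)) (u₀ ψ σ₀ : S → ℝ)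
    (hPu : P u₀ = fun x => σ₀ x * u₀ x)
    (hPψ : P ψ = fun x => -(σ₀ x * ψ x))
    (hσ₀ : ∀ x, 0 < σ₀ x)
    (δ : ℝ) (hδ : ∀ x, |δ| * |ψ x| < u₀ x) :
    let uδ : ℝ → S → ℝ := fun d x => u₀ x + d * ψ x
    let σδ : ℝ → S → ℝ := fun d x => σ₀ x * (u₀ x - d * ψ x) / (u₀ x + d * ψ x)
    let Hδ : ℝ → S → ℝ := fun d x => σδ d x * (uδ d x) ^ 2
    (P (uδ δ) = fun x => σδ δ x * uδ δ x) ∧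
    (∀ x, 0 < σδ δ x) ∧
    (Hδ δ = Hδ (-δ) ∧ Hδ δ = fun x => σ₀ x * ((u₀ x) ^ 2 - δ ^ 2 * (ψ x) ^ 2)) ∧
    (δ ≠ 0 → ∀ x, ψ x ≠ 0 → σδ δ x ≠ σδ (-δ) x) ∧
    (∀ x, ψ x = 0 → uδ δ x = u₀ x ∧ σδ δ x = σ₀ x) := by
  intro uδ σδ Hδ
  have hlt (x : S) : |δ * ψ x| < u₀ x := (abs_mul δ (ψ x)).trans_lt (hδ x)
  have hu₀ (x : S) : 0 < u₀ x := (abs_nonneg _).trans_lt (hlt x)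
  have hadd (x : S) : u₀ x + δ * ψ x ≠ 0 := by linarith [(abs_lt.mp (hlt x)).1]
  have hsub (x : S) : u₀ x - δ * ψ x ≠ 0 := by linarith [(abs_lt.mp (hlt x)).2]
  have hH (d : ℝ) (x : S) (h : u₀ x + d * ψ x ≠ 0) :
      Hδ d x = σ₀ x * (u₀ x ^ 2 - d ^ 2 * ψ x ^ 2) := by
    rw [← mul_pow]; exact mul_sub_div_add_mul_add_sq h
  have hH_neg (x : S) : Hδ (-δ) x = σ₀ x * (u₀ x ^ 2 - δ ^ 2 * ψ x ^ 2) := by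
    rw [hH (-δ) x (by rw [neg_mul, ← sub_eq_add_neg]; exact hsub x), neg_sq]
  refine ⟨?_, fun x => mul_sub_div_add_pos (hσ₀ x) (hlt x),
    ⟨funext fun x => (hH δ x (hadd x)).trans (hH_neg x).symm, funext fun x => hH δ x (hadd x)⟩,
    fun hδ0 x hψ => ?_, fun x hψ => ?_⟩
  · funext x
    have heigen := congrFun (P.apply_add_smul_of_eigen hPu hPψ δ) x
    exact heigen.trans (div_mul_cancel₀ _ (hadd x)).symm
  · simpa only [σδ, neg_mul, sub_neg_eq_add, ← sub_eq_add_neg] using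
      mul_sub_div_add_ne_mul_add_div_sub (hσ₀ x).ne' (hu₀ x).ne' (mul_ne_zero hδ0 hψ)
        (hadd x) (hsub x)
  · simp [uδ, σδ, hψ, mul_div_assoc, div_self (hu₀ x).ne']

/-- Ambrosetti–Prodi-type non-uniqueness: if `P u₀ = σ₀ u₀` and `P ψ = −σ₀ ψ` with
`σ₀, u₀ > 0` and `|δ| |ψ| < u₀` pointwise, then `u_δ := u₀ + δψ` and
`σ_δ := σ₀ (u₀ − δψ)/(u₀ + δψ)` satisfy `P u_δ = σ_δ u_δ`, `σ_δ > 0`,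
`H_δ := σ_δ u_δ² = H_{−δ} = σ₀(u₀² − δ²ψ²)`, `σ_δ ≠ σ_{−δ}` wherever `ψ ≠ 0` (for
`δ ≠ 0`), and `u_δ = u₀`, `σ_δ = σ₀` wherever `ψ = 0`. -/
theorem ambrosetti_prodi_nonuniqueness {S : Type*}
    (P : (S → ℝ) →ₗ[ℝ] (S → ℝ)) (u₀ ψ σ₀ : S → ℝ)
    (hPu : P u₀ = fun x => σ₀ x * u₀ x)
    (hPψ : P ψ = fun x => -(σ₀ x * ψ x))
    (hσ₀ : ∀ x, 0 < σ₀ x) (hu₀ : ∀ x, 0 < u₀ x)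
    (δ : ℝ) (hδ : ∀ x, |δ| * |ψ x| < u₀ x) :
    let uδ : ℝ → S → ℝ := fun d x => u₀ x + d * ψ x
    let σδ : ℝ → S → ℝ := fun d x => σ₀ x * (u₀ x - d * ψ x) / (u₀ x + d * ψ x)
    let Hδ : ℝ → S → ℝ := fun d x => σδ d x * (uδ d x) ^ 2
    (P (uδ δ) = fun x => σδ δ x * uδ δ x) ∧
    (∀ x, 0 < σδ δ x) ∧
    (Hδ δ = Hδ (-δ) ∧ Hδ δ = fun x => σ₀ x * ((u₀ x) ^ 2 - δ ^ 2 * (ψ x) ^ 2)) ∧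
    (δ ≠ 0 → ∀ x, ψ x ≠ 0 → σδ δ x ≠ σδ (-δ) x) ∧
    (∀ x, ψ x = 0 → uδ δ x = u₀ x ∧ σδ δ x = σ₀ x) :=
  ambrosetti_prodi_nonuniqueness_general P u₀ ψ σ₀ hPu hPψ hσ₀ δ hδ
end

section
/- Let 𝐤, 𝐥 ∈ ℝⁿ satisfy 𝐤 · 𝐥 = 0 and ‖𝐤‖ = ‖𝐥‖ = k > 0, and let α > 0. Define u₁(x) := e^{𝐤·x} sin(𝐥·x), u₂(x) := e^{𝐤·x} cos(𝐥·x), and β_α := u₁ ∇u₂ − α u₂ ∇u₁. Then for every x ∈ ℝⁿ: β_α(x) = k e^{2𝐤·x} [ (1−α) sin(𝐥·x) cos(𝐥·x) 𝐤̂ − ( sin²(𝐥·x) + α cos²(𝐥·x) ) 𝐥̂ ], and consequently ‖β_α(x)‖ ≥ min(1, α) · k e^{2𝐤·x} > 0. -/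
/-- Euclidean inner (dot) product. -/
noncomputable def ip {n : ℕ} (a b : EuclideanSpace ℝ (Fin n)) : ℝ := inner ℝ a b

/-!
The gradients of `e^{K·x} sin(L·x)` and `e^{K·x} cos(L·x)` are explicit, which gives
`β_α(x) = e^{2K·x} [(1-α) s c K - (s² + α c²) L]` with `s = sin(L·x)`, `c = cos(L·x)`.
As `K ⊥ L`, the norm of this vector is at least that of its `L`-component,
`e^{2K·x} (s² + α c²) k`, and `s² + α c² ≥ min(1, α)` because `s² + c² = 1`.
-/

theorem grad'_eq_of_hasFDerivAt {n : ℕ} {f : EuclideanSpace ℝ (Fin n) → ℝ}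
    {v x : EuclideanSpace ℝ (Fin n)} (hf : HasFDerivAt f (innerSL ℝ v) x) : grad' f x = v := by
  ext i
  simp [grad', pderiv', hf.fderiv, EuclideanSpace.inner_single_right]

theorem grad'_exp_ip_mul_comp_ip {n : ℕ} (K L x : EuclideanSpace ℝ (Fin n)) {g : ℝ → ℝ}
    {g' : ℝ} (hg : HasDerivAt g g' (ip L x)) :
    grad' (fun y => Real.exp (ip K y) * g (ip L y)) x
      = (Real.exp (ip K x) * g (ip L x)) • K + (Real.exp (ip K x) * g') • L := by
  apply grad'_eq_of_hasFDerivAt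
  refine (((innerSL ℝ K).hasFDerivAt.exp).mul
    (hg.comp_hasFDerivAt x (innerSL ℝ L).hasFDerivAt)).congr_fderiv ?_
  ext y
  simp only [ip, coe_innerSL_apply, Function.comp_apply, add_apply,
    smul_apply, smul_eq_mul, inner_add_left, real_inner_smul_left]
  ring

theorem norm_le_norm_sub_of_real_inner_eq_zero {F : Type*} [NormedAddCommGroup F]
    [InnerProductSpace ℝ F] {x y : F} (h : inner ℝ x y = 0) : ‖y‖ ≤ ‖x - y‖ := by
  have := norm_sub_sq_eq_norm_sq_add_norm_sq_real h
  nlinarith [norm_nonneg y, norm_nonneg (x - y), norm_nonneg x]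

theorem min_le_mul_sin_sq_add_mul_cos_sq (a b θ : ℝ) :
    min a b ≤ a * Real.sin θ ^ 2 + b * Real.cos θ ^ 2 := by
  calc min a b = min a b * Real.sin θ ^ 2 + min a b * Real.cos θ ^ 2 := by
        rw [← mul_add, Real.sin_sq_add_cos_sq, mul_one]
    _ ≤ a * Real.sin θ ^ 2 + b * Real.cos θ ^ 2 := by
        gcongr
        exacts [min_le_left a b, min_le_right a b]

theorem cgo_beta_alpha_lower_bound_general {n : ℕ} (K L : EuclideanSpace ℝ (Fin n)) (k : ℝ)
    (horth : ip K L = 0) (hL : ‖L‖ = k) (hk : 0 < k)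
    (α : ℝ) (hα : 0 < α) :
    let u₁ : EuclideanSpace ℝ (Fin n) → ℝ := fun x => Real.exp (ip K x) * Real.sin (ip L x)
    let u₂ : EuclideanSpace ℝ (Fin n) → ℝ := fun x => Real.exp (ip K x) * Real.cos (ip L x)
    let β : EuclideanSpace ℝ (Fin n) → EuclideanSpace ℝ (Fin n) :=
      fun x => u₁ x • grad' u₂ x - (α * u₂ x) • grad' u₁ x
    ∀ x : EuclideanSpace ℝ (Fin n),
      β x = (k * Real.exp (2 * ip K x)) •
          (((1 - α) * Real.sin (ip L x) * Real.cos (ip L x)) • (k⁻¹ • K)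
            - (Real.sin (ip L x) ^ 2 + α * Real.cos (ip L x) ^ 2) • (k⁻¹ • L)) ∧
      min 1 α * (k * Real.exp (2 * ip K x)) ≤ ‖β x‖ ∧
      0 < min 1 α * (k * Real.exp (2 * ip K x)) := by
  intro u₁ u₂ β x
  set s := Real.sin (ip L x)
  set c := Real.cos (ip L x)
  have hexp : Real.exp (2 * ip K x) = Real.exp (ip K x) ^ 2 := by
    rw [← Real.exp_nat_mul, Nat.cast_ofNat]
  have hβ : β x = Real.exp (ip K x) ^ 2 • (((1 - α) * s * c) • K - (s ^ 2 + α * c ^ 2) • L) := by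
    simp only [β, u₁, u₂, grad'_exp_ip_mul_comp_ip K L x (Real.hasDerivAt_sin _),
      grad'_exp_ip_mul_comp_ip K L x (Real.hasDerivAt_cos _)]
    module
  refine ⟨?_, ?_, by positivity⟩
  · rw [hβ, hexp]
    match_scalars <;> field_simp
  · have hperp : inner ℝ (((1 - α) * s * c) • K) ((s ^ 2 + α * c ^ 2) • L) = 0 := by
      rw [real_inner_smul_left, real_inner_smul_right, ← ip, horth, mul_zero, mul_zero]
    calc min 1 α * (k * Real.exp (2 * ip K x))
        ≤ (s ^ 2 + α * c ^ 2) * (k * Real.exp (2 * ip K x)) := by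
          gcongr
          simpa using min_le_mul_sin_sq_add_mul_cos_sq 1 α (ip L x)
      _ = Real.exp (ip K x) ^ 2 * ‖(s ^ 2 + α * c ^ 2) • L‖ := by
          rw [norm_smul, hL, hexp, Real.norm_of_nonneg (by positivity)]
          ring
      _ ≤ ‖β x‖ := by
          rw [hβ, norm_smul (Real.exp (ip K x) ^ 2), Real.norm_of_nonneg (by positivity)]
          exact mul_le_mul_of_nonneg_left (norm_le_norm_sub_of_real_inner_eq_zero hperp)
            (sq_nonneg _)

/-- Lower bound for the vector field `β_α = u₁∇u₂ − α u₂∇u₁` built from the real and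
imaginary parts `u₂ = e^{𝐤·x}cos(𝐥·x)`, `u₁ = e^{𝐤·x}sin(𝐥·x)` of a harmonic CGO
solution: `β_α = k e^{2𝐤·x}[(1−α) sin cos 𝐤̂ − (sin² + α cos²) 𝐥̂]` and
`‖β_α‖ ≥ min(1,α) k e^{2𝐤·x} > 0`. -/
theorem cgo_beta_alpha_lower_bound {n : ℕ} (K L : EuclideanSpace ℝ (Fin n)) (k : ℝ)
    (horth : ip K L = 0) (hK : ‖K‖ = k) (hL : ‖L‖ = k) (hk : 0 < k)
    (α : ℝ) (hα : 0 < α) :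
    let u₁ : EuclideanSpace ℝ (Fin n) → ℝ := fun x => Real.exp (ip K x) * Real.sin (ip L x)
    let u₂ : EuclideanSpace ℝ (Fin n) → ℝ := fun x => Real.exp (ip K x) * Real.cos (ip L x)
    let β : EuclideanSpace ℝ (Fin n) → EuclideanSpace ℝ (Fin n) :=
      fun x => u₁ x • grad' u₂ x - (α * u₂ x) • grad' u₁ x
    ∀ x : EuclideanSpace ℝ (Fin n),
      β x = (k * Real.exp (2 * ip K x)) •
          (((1 - α) * Real.sin (ip L x) * Real.cos (ip L x)) • (k⁻¹ • K)
            - (Real.sin (ip L x) ^ 2 + α * Real.cos (ip L x) ^ 2) • (k⁻¹ • L)) ∧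
      min 1 α * (k * Real.exp (2 * ip K x)) ≤ ‖β x‖ ∧
      0 < min 1 α * (k * Real.exp (2 * ip K x)) :=
  cgo_beta_alpha_lower_bound_general K L k horth hL hk α hα
end

section
/- For t ∈ ℝ define the vectors in ℝ³ (coordinates in the standard orthonormal basis e₁, e₂, e₃): S₁(t) = −sin t · e₁ + cos t · e₂, S₂(t) = cos t · e₁ + sin t · e₂, S₃(t) = −sin t · e₁ + cos t · e₃, S₄(t) = cos t · e₂ + sin t · e₃. Then det(S₁(t), S₂(t), S₃(t)) = −cos t and det(S₁(t), S₂(t), S₄(t)) = −sin t for all t, and consequently max( |det(S₁, S₂, S₃)|, |det(S₁, S₂, S₄)| ) ≥ √2/2 for every t ∈ ℝ. -/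
open Matrix

lemma det_frame_S₁_S₂_S₃ (s c : ℝ) :
    det (of ![(-s) • ![1, 0, 0] + c • ![0, 1, 0], c • ![1, 0, 0] + s • ![0, 1, 0],
      (-s) • ![1, 0, 0] + c • ![0, 0, 1]] : Matrix (Fin 3) (Fin 3) ℝ) = -c * (s ^ 2 + c ^ 2) := by
  simp [det_fin_three]
  ring

lemma det_frame_S₁_S₂_S₄ (s c : ℝ) :
    det (of ![(-s) • ![1, 0, 0] + c • ![0, 1, 0], c • ![1, 0, 0] + s • ![0, 1, 0],
      c • ![0, 1, 0] + s • ![0, 0, 1]] : Matrix (Fin 3) (Fin 3) ℝ) = -s * (s ^ 2 + c ^ 2) := by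
  simp [det_fin_three]
  ring

lemma sqrt_two_div_two_le_max_abs {a b : ℝ} (h : a ^ 2 + b ^ 2 = 1) :
    √2 / 2 ≤ max |a| |b| := by
  set m := max |a| |b|
  have ha : a ^ 2 ≤ m ^ 2 := sq_abs a ▸ pow_le_pow_left₀ (abs_nonneg a) (le_max_left _ _) 2
  have hb : b ^ 2 ≤ m ^ 2 := sq_abs b ▸ pow_le_pow_left₀ (abs_nonneg b) (le_max_right _ _) 2
  have hm : 0 ≤ m := (abs_nonneg a).trans (le_max_left _ _)
  refine (pow_le_pow_iff_left₀ (by positivity) hm two_ne_zero).mp ?_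
  rw [div_pow, Real.sq_sqrt zero_le_two]
  linarith

/-- Determinants of the leading-order CGO gradient frames in 3D:
`det(S₁,S₂,S₃) = −cos t`, `det(S₁,S₂,S₄) = −sin t`, so at each `t` the larger of the two
determinants (in absolute value) is at least `√2/2`. -/
theorem cgo_determinants_lower_bound (t : ℝ) :
    let e₁ : Fin 3 → ℝ := ![1, 0, 0]
    let e₂ : Fin 3 → ℝ := ![0, 1, 0]
    let e₃ : Fin 3 → ℝ := ![0, 0, 1]
    let S₁ : Fin 3 → ℝ := (-Real.sin t) • e₁ + Real.cos t • e₂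
    let S₂ : Fin 3 → ℝ := Real.cos t • e₁ + Real.sin t • e₂
    let S₃ : Fin 3 → ℝ := (-Real.sin t) • e₁ + Real.cos t • e₃
    let S₄ : Fin 3 → ℝ := Real.cos t • e₂ + Real.sin t • e₃
    det (Matrix.of ![S₁, S₂, S₃]) = -Real.cos t ∧
    det (Matrix.of ![S₁, S₂, S₄]) = -Real.sin t ∧
    Real.sqrt 2 / 2 ≤
      max |det (Matrix.of ![S₁, S₂, S₃])| |det (Matrix.of ![S₁, S₂, S₄])| := by
  intro e₁ e₂ e₃ S₁ S₂ S₃ S₄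
  have h₃ : det (of ![S₁, S₂, S₃]) = -Real.cos t := by
    simpa only [Real.sin_sq_add_cos_sq, mul_one] using det_frame_S₁_S₂_S₃ (Real.sin t) (Real.cos t)
  have h₄ : det (of ![S₁, S₂, S₄]) = -Real.sin t := by
    simpa only [Real.sin_sq_add_cos_sq, mul_one] using det_frame_S₁_S₂_S₄ (Real.sin t) (Real.cos t)
  refine ⟨h₃, h₄, ?_⟩
  rw [h₃, h₄, abs_neg, abs_neg]
  exact sqrt_two_div_two_le_max_abs (Real.cos_sq_add_sin_sq t)
end

section
/- Let Ω ⊆ ℝⁿ be open, let σ₁, σ₂ : Ω → ℝ be continuous with σⱼ > 0 on Ω, and let u₁, u₂ : Ω → ℝ be twice continuously differentiable with uⱼ > 0 on Ω, satisfying Δuⱼ = σⱼ uⱼ on Ω for j = 1, 2. If σ₁ u₁² = σ₂ u₂² on Ω, then σ₁ u₁ − σ₂ u₂ = √(σ₁σ₂) (u₂ − u₁) pointwise, and hence the difference w := u₁ − u₂ satisfies Δw + √(σ₁σ₂) w = 0 on Ω. -/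
/-- Laplacian `Δf = ∑ᵢ ∂²f/∂xᵢ²` of a scalar function on Euclidean space. -/
noncomputable def lap {n : ℕ} (f : EuclideanSpace ℝ (Fin n) → ℝ)
    (x : EuclideanSpace ℝ (Fin n)) : ℝ :=
  ∑ i, pderiv' (pderiv' f i) i x

/-!
Since `σⱼ, uⱼ ≥ 0`, taking square roots of `σ₁u₁² = σ₂u₂²` gives `√σ₁ u₁ = √σ₂ u₂`, and then
`σ₁u₁ − σ₂u₂ = √σ₁ (√σ₂ u₂) − √σ₂ (√σ₁ u₁) = √(σ₁σ₂) (u₂ − u₁)`. Subtracting the equations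
`Δuⱼ = σⱼuⱼ` and using linearity of `Δ` on `C²` functions yields the equation for `u₁ − u₂`.
-/

open Real

theorem mul_sub_mul_eq_sqrt_mul_mul_sub_of_mul_sq_eq {s t a b : ℝ} (hs : 0 ≤ s) (ht : 0 ≤ t)
    (ha : 0 ≤ a) (hb : 0 ≤ b) (h : s * a ^ 2 = t * b ^ 2) :
    s * a - t * b = √(s * t) * (b - a) := by
  have hsqrt : √s * a = √t * b := by
    rw [← sqrt_sq ha, ← sqrt_sq hb, ← sqrt_mul hs, ← sqrt_mul ht, h]
  calc s * a - t * b = √s * (√s * a) - √t * (√t * b) := by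
        rw [← mul_assoc, ← mul_assoc, mul_self_sqrt hs, mul_self_sqrt ht]
    _ = √s * (√t * b) - √t * (√s * a) := by rw [hsqrt]
    _ = √(s * t) * (b - a) := by rw [sqrt_mul hs]; ring

section Laplacian

variable {n : ℕ} {f g : EuclideanSpace ℝ (Fin n) → ℝ} {x : EuclideanSpace ℝ (Fin n)}

theorem pderiv'_sub (hf : DifferentiableAt ℝ f x) (hg : DifferentiableAt ℝ g x) (i : Fin n) :
    pderiv' (fun y => f y - g y) i x = pderiv' f i x - pderiv' g i x := by
  simp only [pderiv', fderiv_fun_sub hf hg, sub_apply]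

theorem ContDiffOn.differentiableAt_pderiv' {Ω : Set (EuclideanSpace ℝ (Fin n))}
    (hΩ : IsOpen Ω) (hf : ContDiffOn ℝ 2 f Ω) (i : Fin n) (hx : x ∈ Ω) :
    DifferentiableAt ℝ (pderiv' f i) x := by
  have hDf : ContDiffOn ℝ 1 (pderiv' f i) Ω :=
    (ContinuousLinearMap.apply ℝ ℝ (EuclideanSpace.single i (1 : ℝ))).contDiff.comp_contDiffOn
      (hf.fderiv_of_isOpen hΩ (by norm_num))
  exact (hDf.differentiableOn one_ne_zero).differentiableAt (hΩ.mem_nhds hx)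

theorem lap_sub {Ω : Set (EuclideanSpace ℝ (Fin n))} (hΩ : IsOpen Ω) (hf : ContDiffOn ℝ 2 f Ω)
    (hg : ContDiffOn ℝ 2 g Ω) (hx : x ∈ Ω) :
    lap (fun y => f y - g y) x = lap f x - lap g x := by
  have hdiff : ∀ {h : EuclideanSpace ℝ (Fin n) → ℝ}, ContDiffOn ℝ 2 h Ω →
      ∀ y ∈ Ω, DifferentiableAt ℝ h y := fun hh y hy =>
    (hh.differentiableOn (by norm_num)).differentiableAt (hΩ.mem_nhds hy)
  rw [lap, lap, lap, ← Finset.sum_sub_distrib]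
  refine Finset.sum_congr rfl fun i _ => ?_
  have hev : pderiv' (fun y => f y - g y) i =ᶠ[nhds x] fun y => pderiv' f i y - pderiv' g i y := by
    filter_upwards [hΩ.mem_nhds hx] with y hy
    exact pderiv'_sub (hdiff hf y hy) (hdiff hg y hy) i
  rw [pderiv', hev.fderiv_eq, ← pderiv',
    pderiv'_sub (hf.differentiableAt_pderiv' hΩ i hx) (hg.differentiableAt_pderiv' hΩ i hx)]

end Laplacian

theorem acousto_optic_difference_equation_general {n : ℕ} (Ω : Set (EuclideanSpace ℝ (Fin n)))
    (hΩ : IsOpen Ω) (σ₁ σ₂ u₁ u₂ : EuclideanSpace ℝ (Fin n) → ℝ)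
    (hσ₁pos : ∀ x ∈ Ω, 0 < σ₁ x) (hσ₂pos : ∀ x ∈ Ω, 0 < σ₂ x)
    (hu₁ : ContDiffOn ℝ 2 u₁ Ω) (hu₂ : ContDiffOn ℝ 2 u₂ Ω)
    (hu₁pos : ∀ x ∈ Ω, 0 < u₁ x) (hu₂pos : ∀ x ∈ Ω, 0 < u₂ x)
    (heq₁ : ∀ x ∈ Ω, lap u₁ x = σ₁ x * u₁ x)
    (heq₂ : ∀ x ∈ Ω, lap u₂ x = σ₂ x * u₂ x)
    (hH : ∀ x ∈ Ω, σ₁ x * u₁ x ^ 2 = σ₂ x * u₂ x ^ 2) :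
    ∀ x ∈ Ω,
      σ₁ x * u₁ x - σ₂ x * u₂ x = Real.sqrt (σ₁ x * σ₂ x) * (u₂ x - u₁ x) ∧
      lap (fun y => u₁ y - u₂ y) x + Real.sqrt (σ₁ x * σ₂ x) * (u₁ x - u₂ x) = 0 := by
  intro x hx
  have hdiff : σ₁ x * u₁ x - σ₂ x * u₂ x = √(σ₁ x * σ₂ x) * (u₂ x - u₁ x) :=
    mul_sub_mul_eq_sqrt_mul_mul_sub_of_mul_sq_eq (hσ₁pos x hx).le (hσ₂pos x hx).le
      (hu₁pos x hx).le (hu₂pos x hx).le (hH x hx)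
  refine ⟨hdiff, ?_⟩
  rw [lap_sub hΩ hu₁ hu₂ hx, heq₁ x hx, heq₂ x hx]
  linear_combination hdiff

/-- If `Δuⱼ = σⱼ uⱼ` with `σⱼ, uⱼ > 0` on an open set `Ω` and the internal measurements
coincide, `σ₁u₁² = σ₂u₂²`, then `σ₁u₁ − σ₂u₂ = √(σ₁σ₂)(u₂ − u₁)` and the difference
`w = u₁ − u₂` satisfies `Δw + √(σ₁σ₂) w = 0` on `Ω`. -/
theorem acousto_optic_difference_equation {n : ℕ} (Ω : Set (EuclideanSpace ℝ (Fin n)))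
    (hΩ : IsOpen Ω) (σ₁ σ₂ u₁ u₂ : EuclideanSpace ℝ (Fin n) → ℝ)
    (hσ₁ : ContinuousOn σ₁ Ω) (hσ₂ : ContinuousOn σ₂ Ω)
    (hσ₁pos : ∀ x ∈ Ω, 0 < σ₁ x) (hσ₂pos : ∀ x ∈ Ω, 0 < σ₂ x)
    (hu₁ : ContDiffOn ℝ 2 u₁ Ω) (hu₂ : ContDiffOn ℝ 2 u₂ Ω)
    (hu₁pos : ∀ x ∈ Ω, 0 < u₁ x) (hu₂pos : ∀ x ∈ Ω, 0 < u₂ x)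
    (heq₁ : ∀ x ∈ Ω, lap u₁ x = σ₁ x * u₁ x)
    (heq₂ : ∀ x ∈ Ω, lap u₂ x = σ₂ x * u₂ x)
    (hH : ∀ x ∈ Ω, σ₁ x * u₁ x ^ 2 = σ₂ x * u₂ x ^ 2) :
    ∀ x ∈ Ω,
      σ₁ x * u₁ x - σ₂ x * u₂ x = Real.sqrt (σ₁ x * σ₂ x) * (u₂ x - u₁ x) ∧
      lap (fun y => u₁ y - u₂ y) x + Real.sqrt (σ₁ x * σ₂ x) * (u₁ x - u₂ x) = 0 :=
  acousto_optic_difference_equation_general Ω hΩ σ₁ σ₂ u₁ u₂ hσ₁pos hσ₂pos hu₁ hu₂ hu₁pos hu₂pos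
    heq₁ heq₂ hH
end
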